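/- Let W₁, W₂ ⊆ Σ^ω be objectives that are positional over Eve-games, and suppose W₁ is prefix-independent. Then W₁ ∪ W₂ is positional over Eve-games. -/

import Mathlib

universe u

/-- Concatenation of a finite word with an infinite word. -/
def wcat {A : Type*} (u : List A) (x : ℕ → A) : ℕ → A := fun n =>
  if h : n < u.length then u.get ⟨n, h⟩ else x (n - u.length)

/-- The resid of a language of infinite words with respect to a finite word. -/
def resid {A : Type*} (L : Set (ℕ → A)) (u : List A) : Set (ℕ → A) := {x | wcat u x ∈ L}

/-- The infinite word `w^ω` obtained by repeating a (nonempty) finite word `w`. -/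
def omegaPow {A : Type*} [Inhabited A] (w : List A) : ℕ → A :=
  fun n => w.getD (n % w.length) default

/-- The path obtained from `v` by following the positional strategy `σ`. -/
def stratPath {V A : Type*} (σ : V → A × V) (v : V) : ℕ → V
  | 0 => v
  | n + 1 => (σ (stratPath σ v n)).2

/-- `W` is positional over Eve-games: in every (possibly infinite) Eve-game, i.e.
every `A`-labelled directed graph in which each vertex has an outgoing edge, there
is a single positional strategy winning from every vertex from which some winning
play exists. -/
def PositionalEve {A : Type u} (W : Set (ℕ → A)) : Prop :=
  ∀ (V : Type u) (E : V → A → V → Prop), (∀ v, ∃ a v', E v a v') →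
    ∃ σ : V → A × V, (∀ v, E v (σ v).1 (σ v).2) ∧
      ∀ v, (∃ (ρ : ℕ → V) (lab : ℕ → A), ρ 0 = v ∧
              (∀ n, E (ρ n) (lab n) (ρ (n + 1))) ∧ lab ∈ W) →
        (fun n => (σ (stratPath σ v n)).1) ∈ W

/-!
Let `σ₁`, `σ₂` be uniform positional strategies for `W₁` and `W₂`, and let `X` be the set of
vertices from which `σ₁` wins `W₁`. By prefix independence `X` is closed under `σ₁`-moves, so
the strategy playing `σ₁` on `X` and `σ₂` elsewhere wins `W₁` as soon as its play enters `X`.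
A play that never enters `X` is the `σ₂`-play from a vertex outside `X`, where no play wins `W₁`
(by uniformity of `σ₁`); a winning play for `W₁ ∪ W₂` from there is thus in `W₂`, and so is the
`σ₂`-play.
-/

def PrefixIndependent {A : Type*} (W : Set (ℕ → A)) : Prop :=
  ∀ (u : List A) (w : ℕ → A), wcat u w ∈ W ↔ w ∈ W

lemma wcat_ofFn_shift {A : Type*} (x : ℕ → A) (k : ℕ) :
    wcat (List.ofFn fun i : Fin k => x i) (fun n => x (n + k)) = x := by
  funext n
  simp only [wcat, List.length_ofFn]
  by_cases h : n < k
  · simp [h]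
  · rw [dif_neg h, Nat.sub_add_cancel (Nat.le_of_not_lt h)]

lemma PrefixIndependent.shift_mem_iff {A : Type*} {W : Set (ℕ → A)} (hW : PrefixIndependent W)
    (x : ℕ → A) (k : ℕ) : (fun n => x (n + k)) ∈ W ↔ x ∈ W := by
  rw [← hW (List.ofFn fun i : Fin k => x i), wcat_ofFn_shift]

section Strategies

variable {V A : Type*}

def stratLabel (σ : V → A × V) (v : V) : ℕ → A := fun n => (σ (stratPath σ v n)).1

lemma stratPath_add (σ : V → A × V) (v : V) (k n : ℕ) :
    stratPath σ v (k + n) = stratPath σ (stratPath σ v k) n := by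
  induction n with
  | zero => rfl
  | succ n ih => exact congrArg (fun w => (σ w).2) ih

lemma stratLabel_shift (σ : V → A × V) (v : V) (k : ℕ) :
    (fun n => stratLabel σ v (n + k)) = stratLabel σ (stratPath σ v k) := by
  funext n
  rw [stratLabel, stratLabel, Nat.add_comm, stratPath_add]

lemma stratPath_eq_of_forall_eq {σ σ' : V → A × V} {v : V}
    (h : ∀ n, σ (stratPath σ v n) = σ' (stratPath σ v n)) : stratPath σ v = stratPath σ' v := by
  funext n
  induction n with
  | zero => rfl
  | succ n ih => exact (congrArg Prod.snd (h n)).trans (congrArg (fun w => (σ' w).2) ih)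

lemma stratLabel_eq_of_forall_eq {σ σ' : V → A × V} {v : V}
    (h : ∀ n, σ (stratPath σ v n) = σ' (stratPath σ v n)) : stratLabel σ v = stratLabel σ' v := by
  funext n
  rw [stratLabel, stratLabel, ← stratPath_eq_of_forall_eq h, h]

variable {X : Set V} [DecidablePred (· ∈ X)]

lemma stratLabel_piecewise_of_mem {σ₁ σ₂ : V → A × V}
    (hX : ∀ w ∈ X, ∀ n, stratPath σ₁ w n ∈ X) {w : V} (hw : w ∈ X) :
    stratLabel (X.piecewise σ₁ σ₂) w = stratLabel σ₁ w :=
  (stratLabel_eq_of_forall_eq fun n => (Set.piecewise_eq_of_mem _ _ _ (hX w hw n)).symm).symm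

lemma stratLabel_piecewise_of_forall_notMem {σ₁ σ₂ : V → A × V} {v : V}
    (hv : ∀ n, stratPath (X.piecewise σ₁ σ₂) v n ∉ X) :
    stratLabel (X.piecewise σ₁ σ₂) v = stratLabel σ₂ v :=
  stratLabel_eq_of_forall_eq fun n => Set.piecewise_eq_of_notMem _ _ _ (hv n)

lemma stratPath_mem_winning_set {W : Set (ℕ → A)} (hW : PrefixIndependent W) (σ : V → A × V)
    {w : V} (hw : stratLabel σ w ∈ W) (n : ℕ) :
    stratPath σ w n ∈ {x | stratLabel σ x ∈ W} := by
  rw [Set.mem_ofPred_eq, ← stratLabel_shift, hW.shift_mem_iff]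
  exact hw

end Strategies

/-- Union of objectives positional over Eve-games, one of them prefix-independent,
is positional over Eve-games. -/
theorem positional_union_prefixIndependent {A : Type u}
    (W₁ W₂ : Set (ℕ → A))
    (hpi : ∀ (u : List A) (w : ℕ → A), wcat u w ∈ W₁ ↔ w ∈ W₁)
    (h₁ : PositionalEve W₁) (h₂ : PositionalEve W₂) :
    PositionalEve (W₁ ∪ W₂) := by
  classical
  have hW₁ : PrefixIndependent W₁ := hpi
  intro V E hE
  obtain ⟨σ₁, hσ₁E, hσ₁W⟩ := h₁ V E hE
  obtain ⟨σ₂, hσ₂E, hσ₂W⟩ := h₂ V E hE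
  set X : Set V := {w | stratLabel σ₁ w ∈ W₁}
  have hX : ∀ w ∈ X, ∀ n, stratPath σ₁ w n ∈ X := fun w hw =>
    stratPath_mem_winning_set hW₁ σ₁ hw
  refine ⟨X.piecewise σ₁ σ₂, fun w => ?_, ?_⟩
  · by_cases hw : w ∈ X
    · rw [Set.piecewise_eq_of_mem _ _ _ hw]; exact hσ₁E w
    · rw [Set.piecewise_eq_of_notMem _ _ _ hw]; exact hσ₂E w
  rintro v ⟨ρ, lab, hρ0, hρE, hlab⟩
  change stratLabel _ v ∈ W₁ ∪ W₂
  by_cases hk : ∃ k, stratPath (X.piecewise σ₁ σ₂) v k ∈ X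
  · obtain ⟨k, hkX⟩ := hk
    left
    rw [← hW₁.shift_mem_iff _ k, stratLabel_shift, stratLabel_piecewise_of_mem hX hkX]
    exact hkX
  · push Not at hk
    have hlab₂ : lab ∈ W₂ := hlab.resolve_left fun h => hk 0 (hσ₁W v ⟨ρ, lab, hρ0, hρE, h⟩)
    right
    rw [stratLabel_piecewise_of_forall_notMem hk]
    exact hσ₂W v ⟨ρ, lab, hρ0, hρE, hlab₂⟩
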